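/- arXiv:2410.14427 — 2 statements merged into one kernel-verified Lean document; each statement's English description precedes it below -/
import Mathlib

section
/- For real t and an integer M ≥ 2, the truncated Fourier series of the sawtooth function satisfies: ψ(t) - Σ_{0<|m|≤M} e(-mt)/(2πim) ≪ min{1, 1/(M·‖t‖)}, where ψ(t) = t - ⌊t⌋ - 1/2, e(x) = e^{2πix}, and ‖t‖ is the distance from t to the nearest integer. -/
/-!
For `0 ≤ u < 1` the error of the truncated series is
`F_M(u) = u - 1/2 + ∑_{m=1}^M sin(2πmu)/(πm)`. Its derivative is the Dirichlet kernel
`sin((2M+1)πu) / sin(πu)` and it vanishes at `1/2`, so for `0 < u ≤ 1/2`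
`F_M(u) = -∫_u^{1/2} sin((2M+1)πx) / sin(πx) dx`. Since `1/sin(πx)` decreases on `(0, 1/2]`,
integrating by parts bounds this by `2 / ((2M+1)π sin(πu)) ≤ 1 / ((2M+1)πu)`, using
`sin(πu) ≥ 2u`. For `Mu ≤ 1` the termwise bound `|sin(2πmu)| ≤ 2πmu` gives
`|F_M(u)| ≤ 1/2 + 2Mu`, and `F_M(1-u) = -F_M(u)` covers `1/2 < u < 1`.
-/

open Real Finset intervalIntegral MeasureTheory

/-- A second mean value theorem: integrate by parts, the total variation of the decreasing `g`
being `g a - g b`. -/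
theorem abs_integral_mul_deriv_le_of_deriv_nonpos {a b B : ℝ} {g g' v v' : ℝ → ℝ} (hab : a ≤ b)
    (hg : ∀ x ∈ Set.Icc a b, HasDerivAt g (g' x) x) (hg' : ∀ x ∈ Set.Icc a b, g' x ≤ 0)
    (hg'_int : IntervalIntegrable g' volume a b) (hgb : 0 ≤ g b)
    (hv : ∀ x ∈ Set.Icc a b, HasDerivAt v (v' x) x) (hv'_int : IntervalIntegrable v' volume a b)
    (hvB : ∀ x ∈ Set.Icc a b, |v x| ≤ B) :
    |∫ x in a..b, g x * v' x| ≤ 2 * B * g a := by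
  rw [← Set.uIcc_of_le hab] at hg hv
  have hftc : ∫ x in a..b, g' x = g b - g a := integral_eq_sub_of_hasDerivAt hg hg'_int
  have hgab : g b ≤ g a := by
    have : 0 ≤ ∫ x in a..b, -g' x := integral_nonneg hab fun x hx => neg_nonneg.2 (hg' x hx)
    rw [intervalIntegral.integral_neg, hftc] at this
    linarith
  have hrest : |∫ x in a..b, g' x * v x| ≤ B * (g a - g b) :=
    calc |∫ x in a..b, g' x * v x|
        ≤ ∫ x in a..b, -g' x * B := by
          refine norm_integral_le_of_norm_le (f := fun x => g' x * v x)
            (g := fun x => -g' x * B) hab (Filter.Eventually.of_forall fun x hx => ?_)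
            (hg'_int.neg.mul_const B)
          have hx := Set.Ioc_subset_Icc_self hx
          rw [Real.norm_eq_abs, abs_mul, abs_of_nonpos (hg' x hx)]
          exact mul_le_mul_of_nonneg_left (hvB x hx) (neg_nonneg.2 (hg' x hx))
      _ = B * (g a - g b) := by
          rw [intervalIntegral.integral_mul_const, intervalIntegral.integral_neg, hftc]; ring
  have hva := hvB a ⟨le_rfl, hab⟩
  have hvb := hvB b ⟨hab, le_rfl⟩
  rw [integral_mul_deriv_eq_deriv_mul hg hv hg'_int hv'_int]
  calc |g b * v b - g a * v a - ∫ x in a..b, g' x * v x|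
      ≤ |g b * v b| + |g a * v a| + |∫ x in a..b, g' x * v x| :=
        (abs_sub _ _).trans (add_le_add_left (abs_sub _ _) _)
    _ ≤ g b * B + g a * B + B * (g a - g b) := by
        rw [abs_mul, abs_mul, abs_of_nonneg hgb, abs_of_nonneg (hgb.trans hgab)]
        gcongr
        exact hgb.trans hgab
    _ = 2 * B * g a := by ring

theorem two_mul_le_sin_pi_mul {u : ℝ} (hu : 0 ≤ u) (hu' : u ≤ 1 / 2) : 2 * u ≤ sin (π * u) := by
  have := mul_le_sin (x := π * u) (by positivity) (by nlinarith [pi_pos])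
  rwa [← mul_assoc, div_mul_cancel₀ _ pi_ne_zero] at this

theorem sum_filter_ne_zero_Icc_neg {β : Type*} [AddCommMonoid β] (f : ℤ → β) (n : ℕ) :
    ∑ m ∈ (Icc (-(n : ℤ)) n).filter (· ≠ 0), f m = ∑ k ∈ Icc 1 n, (f k + f (-k)) := by
  induction n with
  | zero => simp [filter_singleton]
  | succ n ih =>
    have hset : (Icc (-((n + 1 : ℕ) : ℤ)) (n + 1 : ℕ)).filter (· ≠ 0) =
        insert ((n : ℤ) + 1) (insert (-((n : ℤ) + 1)) ((Icc (-(n : ℤ)) n).filter (· ≠ 0))) := by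
      ext m; simp; omega
    rw [hset, sum_insert (by simp; omega), sum_insert (by simp), ih, sum_Icc_succ_top (by omega)]
    push_cast
    abel

noncomputable def dirichletKernel (M : ℕ) (u : ℝ) : ℝ :=
  1 + ∑ m ∈ Icc 1 M, 2 * cos (2 * π * m * u)

theorem continuous_dirichletKernel (M : ℕ) : Continuous (dirichletKernel M) := by
  unfold dirichletKernel; fun_prop

theorem sin_mul_dirichletKernel (M : ℕ) (u : ℝ) :
    sin (π * u) * dirichletKernel M u = sin ((2 * M + 1) * π * u) := by
  induction M with
  | zero => simp [dirichletKernel]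
  | succ M ih =>
    rw [dirichletKernel, sum_Icc_succ_top (by omega), ← add_assoc, ← dirichletKernel, mul_add, ih]
    push_cast
    rw [show (2 * (M : ℝ) + 1) * π * u = 2 * π * (M + 1) * u - π * u by ring,
      show (2 * ((M : ℝ) + 1) + 1) * π * u = 2 * π * (M + 1) * u + π * u by ring, sin_sub, sin_add]
    ring

noncomputable def sawtoothFourierSum (M : ℕ) (u : ℝ) : ℝ :=
  ∑ m ∈ Icc 1 M, sin (2 * π * m * u) / (π * m)

-- On `[0, 1)` this is `ψ` minus the symmetric partial sum `∑_{0<|m|≤M} e(-mu)/(2πim)`.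
noncomputable def sawtoothRemainder (M : ℕ) (u : ℝ) : ℝ :=
  u - 1 / 2 + sawtoothFourierSum M u

theorem sawtoothFourierSum_periodic (M : ℕ) : Function.Periodic (sawtoothFourierSum M) 1 := by
  intro u
  refine sum_congr rfl fun m _ => ?_
  rw [show 2 * π * m * (u + 1) = 2 * π * m * u + m * (2 * π) by ring, sin_add_nat_mul_two_pi]

theorem sawtoothFourierSum_one_sub (M : ℕ) (u : ℝ) :
    sawtoothFourierSum M (1 - u) = -sawtoothFourierSum M u := by
  rw [sawtoothFourierSum, sawtoothFourierSum, ← sum_neg_distrib]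
  refine sum_congr rfl fun m _ => ?_
  rw [show 2 * π * m * (1 - u) = m * (2 * π) - 2 * π * m * u by ring, sin_nat_mul_two_pi_sub,
    neg_div]

theorem abs_sawtoothFourierSum_le (M : ℕ) (u : ℝ) : |sawtoothFourierSum M u| ≤ 2 * M * |u| :=
  calc |sawtoothFourierSum M u|
      ≤ ∑ m ∈ Icc 1 M, |sin (2 * π * m * u) / (π * m)| := abs_sum_le_sum_abs _ _
    _ ≤ ∑ _m ∈ Icc 1 M, 2 * |u| := sum_le_sum fun m hm => by
        have : 1 ≤ m := (mem_Icc.1 hm).1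
        have hm : 0 < π * m := by have := pi_pos; positivity
        rw [abs_div, abs_of_pos hm, div_le_iff₀ hm]
        calc |sin (2 * π * m * u)| ≤ |2 * π * m * u| := abs_sin_le_abs
          _ = 2 * |u| * (π * m) := by
            rw [abs_mul, abs_of_pos (by positivity : 0 < 2 * π * m)]; ring
    _ = 2 * M * |u| := by simp; ring

theorem hasDerivAt_sawtoothRemainder (M : ℕ) (u : ℝ) :
    HasDerivAt (sawtoothRemainder M) (dirichletKernel M u) u := by
  have hterm (m : ℕ) (hm : m ∈ Icc 1 M) :
      HasDerivAt (fun u => sin (2 * π * m * u) / (π * m)) (2 * cos (2 * π * m * u)) u := by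
    have hm : (m : ℝ) ≠ 0 := by have := (mem_Icc.1 hm).1; positivity
    refine ((((hasDerivAt_id u).const_mul (2 * π * m)).sin).div_const (π * m)).congr_deriv ?_
    field_simp
    simp
  exact ((hasDerivAt_id u).sub_const _).add (HasDerivAt.fun_sum hterm)

theorem sawtoothRemainder_half (M : ℕ) : sawtoothRemainder M (1 / 2) = 0 := by
  rw [sawtoothRemainder, sawtoothFourierSum, sub_self, zero_add]
  exact sum_eq_zero fun m _ => by
    rw [show 2 * π * m * (1 / 2) = m * π by ring, sin_nat_mul_pi, zero_div]

theorem sawtoothRemainder_one_sub (M : ℕ) (u : ℝ) :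
    sawtoothRemainder M (1 - u) = -sawtoothRemainder M u := by
  rw [sawtoothRemainder, sawtoothRemainder, sawtoothFourierSum_one_sub]; ring

theorem sawtoothRemainder_eq_integral (M : ℕ) (u : ℝ) :
    sawtoothRemainder M u = ∫ x in (1 / 2)..u, dirichletKernel M x := by
  rw [integral_eq_sub_of_hasDerivAt (fun x _ => hasDerivAt_sawtoothRemainder M x)
    ((continuous_dirichletKernel M).intervalIntegrable _ _), sawtoothRemainder_half, sub_zero]

theorem sawtoothRemainder_eq_neg_integral_div_sin (M : ℕ) {u : ℝ} (hu : 0 < u) (hu' : u < 1) :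
    sawtoothRemainder M u =
      -∫ x in u..(1 / 2), (sin (π * x))⁻¹ * sin ((2 * M + 1) * π * x) := by
  rw [sawtoothRemainder_eq_integral, integral_symm]
  congr 1
  refine integral_congr fun x hx => ?_
  have hx : 0 < x ∧ x < 1 := by
    rcases Set.mem_uIcc.1 hx with h | h <;> constructor <;> linarith [h.1, h.2]
  have hsin : sin (π * x) ≠ 0 :=
    (sin_pos_of_pos_of_lt_pi (by nlinarith [pi_pos]) (by nlinarith [pi_pos])).ne'
  rw [← sin_mul_dirichletKernel, inv_mul_cancel_left₀ hsin]

theorem abs_sawtoothRemainder_le_of_le_half (M : ℕ) {u : ℝ} (hu : 0 ≤ u) (hu' : u ≤ 1 / 2) :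
    |sawtoothRemainder M u| ≤ 1 / 2 + 2 * M * u := by
  have h := abs_sawtoothFourierSum_le M u
  rw [abs_of_nonneg hu] at h
  calc |sawtoothRemainder M u| ≤ |u - 1 / 2| + |sawtoothFourierSum M u| := abs_add_le _ _
    _ ≤ 1 / 2 + 2 * M * u := by
        rw [abs_of_nonpos (by linarith)]
        linarith

theorem abs_sawtoothRemainder_le_inv (M : ℕ) {u : ℝ} (hu : 0 < u) (hu' : u ≤ 1 / 2) :
    |sawtoothRemainder M u| ≤ 1 / ((2 * M + 1) * π * u) := by
  set N : ℝ := (2 * M + 1) * π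
  have hN : 0 < N := by positivity
  have hsin : ∀ x ∈ Set.Icc u (1 / 2), 0 < sin (π * x) := fun x hx =>
    sin_pos_of_pos_of_lt_pi (by nlinarith [pi_pos, hx.1]) (by nlinarith [pi_pos, hx.2])
  have hg : ∀ x ∈ Set.Icc u (1 / 2), HasDerivAt (fun x => (sin (π * x))⁻¹)
      (-(cos (π * x) * π) / sin (π * x) ^ 2) x := fun x hx =>
    ((((hasDerivAt_id x).const_mul π).sin).inv (hsin x hx).ne').congr_deriv (by simp)
  have hg' : ∀ x ∈ Set.Icc u (1 / 2), -(cos (π * x) * π) / sin (π * x) ^ 2 ≤ 0 := fun x hx =>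
    div_nonpos_of_nonpos_of_nonneg (neg_nonpos.2 (mul_nonneg (cos_nonneg_of_mem_Icc
      ⟨by nlinarith [pi_pos, hx.1], by nlinarith [pi_pos, hx.2]⟩) pi_pos.le)) (sq_nonneg _)
  have hg'_int :
      IntervalIntegrable (fun x => -(cos (π * x) * π) / sin (π * x) ^ 2) volume u (1 / 2) := by
    refine ContinuousOn.intervalIntegrable ?_
    rw [Set.uIcc_of_le hu']
    exact ContinuousOn.div (by fun_prop) (by fun_prop) fun x hx => pow_ne_zero _ (hsin x hx).ne'
  have hv : ∀ x ∈ Set.Icc u (1 / 2), HasDerivAt (fun x => -cos (N * x) / N) (sin (N * x)) x :=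
    fun x _ => ((((hasDerivAt_id x).const_mul N).cos).neg.div_const N).congr_deriv (by
      field_simp; simp)
  have hvB : ∀ x ∈ Set.Icc u (1 / 2), |-cos (N * x) / N| ≤ 1 / N := fun x _ => by
    rw [abs_div, abs_neg, abs_of_pos hN]
    gcongr
    exact abs_cos_le_one _
  have hbound := abs_integral_mul_deriv_le_of_deriv_nonpos hu' hg hg' hg'_int
    (inv_nonneg.2 (hsin _ ⟨hu', le_rfl⟩).le) hv
    ((by fun_prop : Continuous fun x => sin (N * x)).intervalIntegrable _ _) hvB
  have hjordan := two_mul_le_sin_pi_mul hu.le hu'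
  rw [sawtoothRemainder_eq_neg_integral_div_sin M hu (by linarith), abs_neg]
  calc |∫ x in u..(1 / 2), (sin (π * x))⁻¹ * sin (N * x)|
      ≤ 2 * (1 / N) * (sin (π * u))⁻¹ := hbound
    _ ≤ 2 * (1 / N) * (2 * u)⁻¹ := by gcongr
    _ = 1 / (N * u) := by field_simp

theorem abs_sawtoothRemainder_le {M : ℕ} (hM : 1 ≤ M) {u : ℝ} (hu : 0 ≤ u) (hu' : u ≤ 1 / 2) :
    |sawtoothRemainder M u| ≤ 3 * if u = 0 then 1 else min 1 (1 / (M * u)) := by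
  have hsmall := abs_sawtoothRemainder_le_of_le_half M hu hu'
  rcases hu.eq_or_lt with rfl | hu
  · rw [if_pos rfl]; linarith
  have hM' : (1 : ℝ) ≤ M := by exact_mod_cast hM
  rw [if_neg hu.ne']
  rcases le_total ((M : ℝ) * u) 1 with h | h
  · rw [min_eq_left ((le_div_iff₀ (by positivity)).2 (by linarith))]
    linarith
  · rw [min_eq_right ((div_le_one (by positivity)).2 h)]
    have hlarge := abs_sawtoothRemainder_le_inv M hu hu'
    have : 1 / ((2 * M + 1) * π * u) ≤ 1 / (M * u) :=
      one_div_le_one_div_of_le (by positivity) (by nlinarith [pi_gt_three])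
    have : 0 ≤ 1 / ((M : ℝ) * u) := by positivity
    linarith

theorem abs_sawtoothRemainder_fract_le {M : ℕ} (hM : 1 ≤ M) (t : ℝ) :
    |sawtoothRemainder M (Int.fract t)| ≤
      3 * if |t - round t| = 0 then 1 else min 1 (1 / (M * |t - round t|)) := by
  have h0 := Int.fract_nonneg t
  have h1 := Int.fract_lt_one t
  rw [abs_sub_round_eq_min]
  rcases le_total (Int.fract t) (1 / 2) with h | h
  · rw [min_eq_left (by linarith)]
    exact abs_sawtoothRemainder_le hM h0 h
  · rw [min_eq_right (by linarith), ← abs_neg, ← sawtoothRemainder_one_sub]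
    exact abs_sawtoothRemainder_le hM (by linarith) (by linarith)

theorem cexp_div_add_cexp_neg_div (t : ℝ) {m : ℤ} (hm : m ≠ 0) :
    Complex.exp (2 * π * Complex.I * (-(m : ℝ) * t)) / (2 * π * Complex.I * m) +
        Complex.exp (2 * π * Complex.I * (-((-m : ℤ) : ℝ) * t)) / (2 * π * Complex.I * (-m : ℤ)) =
      -((sin (2 * π * m * t) / (π * m) : ℝ) : ℂ) := by
  have hm : (m : ℂ) ≠ 0 := Int.cast_ne_zero.2 hm
  have hπ : (π : ℂ) ≠ 0 := Complex.ofReal_ne_zero.2 pi_ne_zero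
  have h := Complex.two_sin (2 * π * m * t)
  rw [neg_mul] at h
  push_cast
  rw [neg_neg]
  field_simp
  rw [show 2 * (π : ℂ) * Complex.I * m * t = 2 * π * m * t * Complex.I by ring]
  linear_combination Complex.I * h + (Complex.exp (-(2 * π * m * t * Complex.I)) -
    Complex.exp (2 * π * m * t * Complex.I)) * Complex.I_sq

theorem sum_cexp_div_eq_neg_sawtoothFourierSum (M : ℕ) (t : ℝ) :
    ∑ m ∈ (Icc (-(M : ℤ)) M).filter (· ≠ 0),
        Complex.exp (2 * π * Complex.I * (-(m : ℝ) * t)) / (2 * π * Complex.I * m) =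
      -(sawtoothFourierSum M t : ℂ) := by
  rw [sum_filter_ne_zero_Icc_neg, sawtoothFourierSum, Complex.ofReal_sum, ← sum_neg_distrib]
  refine sum_congr rfl fun k hk => ?_
  rw [cexp_div_add_cexp_neg_div t (by have := (mem_Icc.1 hk).1; omega)]
  simp

open Classical in
theorem sawtooth_fourier_approx :
    ∃ C > 0, ∀ (t : ℝ) (M : ℕ), 2 ≤ M →
      ‖((t - ⌊t⌋ - 1 / 2 : ℝ) : ℂ) -
          ∑ m ∈ (Finset.Icc (-(M : ℤ)) (M : ℤ)).filter (· ≠ 0),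
            Complex.exp (2 * Real.pi * Complex.I * (-(m : ℝ) * t)) / (2 * Real.pi * Complex.I * m)‖
        ≤ C * (if |t - round t| = 0 then 1
               else min 1 (1 / ((M : ℝ) * |t - round t|))) := by
  refine ⟨3, by norm_num, fun t M hM => ?_⟩
  have hS : sawtoothFourierSum M (Int.fract t) = sawtoothFourierSum M t := by
    simpa using (sawtoothFourierSum_periodic M).sub_int_mul_eq ⌊t⌋ (x := t)
  rw [sum_cexp_div_eq_neg_sawtoothFourierSum, sub_neg_eq_add, ← Complex.ofReal_add,
    Int.self_sub_floor, ← hS, ← sawtoothRemainder, Complex.norm_real, norm_eq_abs]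
  exact abs_sawtoothRemainder_fract_le (by omega) t
end

section
/- Van der Corput second-derivative estimate: let F be twice continuously differentiable on [P, 2P] with λ ≤ |F''(x)| ≤ Aλ for all x in [P, 2P], where λ > 0 and A ≥ 1. Then Σ_{P<n≤x} e(F(n)) ≪ A·P·λ^{1/2} + λ^{-1/2} uniformly for P < x ≤ 2P, where e(y) = e^{2πiy}. -/
/-!
Kusmin–Landau: if the increments `θₙ = ψ(n+1) - ψ(n)` are monotone and lie in `[δ, 1 - δ]`,
then `e(ψ n) = (e(ψ (n+1)) - e(ψ n)) · Bₙ` with `Bₙ = (e(θₙ) - 1)⁻¹ = -1/2 - (i/2) cot(π θₙ)`,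
and summation by parts bounds `∑ e(ψ n)` by `1 + 2 cot(π δ) ≤ 2/δ`, because `cot(π θₙ)` is
monotone and so its variation telescopes.

For van der Corput, the second differences of `F` on the integers are values `F''(ξ)`, so the
first differences `dₙ = F(n+1) - F(n)` increase with steps in `[λ, Aλ]`. Put `δ = √λ` and sort
the `n` by the integer `j = ⌊dₙ + δ⌋`. The `n` with `dₙ` within `δ` of `j` are at most
`2δ/λ + 1` in number; the others form an interval on which Kusmin–Landau applies to
`F(n) - jn`. There are at most `AλP + 2` values of `j`, giving `O(AP√λ + 1/√λ)`. The sign of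
`F''` is constant by continuity, a negative sign is removed by complex conjugation, and for
`λ > 1/4` the trivial bound suffices.
-/

open Real Finset fwdDiff

namespace Real

theorem cot_eq_tan_pi_div_two_sub (x : ℝ) : cot x = tan (π / 2 - x) := by
  rw [tan_pi_div_two_sub, cot_eq_cos_div_sin, tan_eq_sin_div_cos, inv_div]

theorem cot_pi_sub (x : ℝ) : cot (π - x) = -cot x := by
  rw [cot_eq_cos_div_sin, cot_eq_cos_div_sin, cos_pi_sub, sin_pi_sub, neg_div]

theorem antitoneOn_cot : AntitoneOn cot (Set.Ioo 0 π) := by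
  intro x hx y hy hxy
  rw [cot_eq_tan_pi_div_two_sub, cot_eq_tan_pi_div_two_sub]
  exact strictMonoOn_tan.monotoneOn ⟨by linarith [hy.2], by linarith [hy.1]⟩
    ⟨by linarith [hx.2], by linarith [hx.1]⟩ (by linarith)

theorem cot_le_inv {x : ℝ} (hx : 0 < x) (hxπ : x ≤ π / 2) : cot x ≤ x⁻¹ := by
  rcases hxπ.lt_or_eq with hlt | rfl
  · rw [cot_eq_tan_pi_div_two_sub, tan_pi_div_two_sub]
    exact inv_anti₀ hx (le_tan hx.le hlt)
  · rw [cot_eq_cos_div_sin, cos_pi_div_two, zero_div]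
    positivity

theorem cot_pi_mul_le_cot_pi_mul {θ θ' : ℝ} (h0 : 0 < θ) (hθθ' : θ ≤ θ') (h1 : θ' < 1) :
    cot (π * θ') ≤ cot (π * θ) :=
  antitoneOn_cot ⟨by nlinarith [pi_pos], by nlinarith [pi_pos]⟩
    ⟨by nlinarith [pi_pos], by nlinarith [pi_pos]⟩ (by nlinarith [pi_pos])

theorem abs_cot_pi_mul_le {δ θ : ℝ} (hδ : 0 < δ) (hδθ : δ ≤ θ) (hθδ : θ ≤ 1 - δ) :
    |cot (π * θ)| ≤ cot (π * δ) := by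
  refine abs_le.2 ⟨?_, cot_pi_mul_le_cot_pi_mul hδ hδθ (by linarith)⟩
  have := cot_pi_mul_le_cot_pi_mul (by linarith) hθδ (by linarith)
  rwa [mul_one_sub, cot_pi_sub] at this

theorem one_add_two_mul_cot_pi_mul_le {δ : ℝ} (hδ : 0 < δ) (hδ' : δ ≤ 1 / 2) :
    1 + 2 * cot (π * δ) ≤ 2 / δ := by
  have hcot := cot_le_inv (by positivity) (by nlinarith [pi_pos] : π * δ ≤ π / 2)
  have h : 2 * (π * δ)⁻¹ ≤ 1 / δ := by
    rw [mul_inv, ← mul_assoc, one_div]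
    exact mul_le_of_le_one_left (by positivity)
      (by rw [← div_eq_mul_inv, div_le_one pi_pos]; linarith [pi_gt_three])
  have : 1 ≤ 1 / δ := by rw [le_div_iff₀ hδ]; linarith
  rw [show (2 : ℝ) / δ = 1 / δ + 1 / δ by ring]
  linarith

end Real

theorem sum_range_succ_eq_of_eq_sub_mul {R : Type*} [CommRing R] {E B : ℕ → R} {N : ℕ}
    (h : ∀ k ≤ N, E k = (E (k + 1) - E k) * B k) :
    ∑ k ∈ range (N + 1), E k =
      E (N + 1) * B N - E 0 * B 0 - ∑ k ∈ range N, E (k + 1) * (B (k + 1) - B k) := by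
  induction N with
  | zero => simpa [sub_mul] using h 0 le_rfl
  | succ N ih =>
    rw [sum_range_succ, ih fun k hk => h k (by omega), sum_range_succ]
    linear_combination h (N + 1) le_rfl

theorem norm_sum_range_succ_le_of_eq_sub_mul {𝕜 : Type*} [NormedField 𝕜] {E B : ℕ → 𝕜} {N : ℕ}
    (hE : ∀ k, ‖E k‖ = 1) (h : ∀ k ≤ N, E k = (E (k + 1) - E k) * B k) :
    ‖∑ k ∈ range (N + 1), E k‖ ≤ ‖B N‖ + ‖B 0‖ + ∑ k ∈ range N, ‖B (k + 1) - B k‖ := by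
  rw [sum_range_succ_eq_of_eq_sub_mul h]
  refine (norm_sub_le _ _).trans (add_le_add ((norm_sub_le _ _).trans_eq ?_) ?_)
  · simp [hE]
  · exact (norm_sum_le _ _).trans_eq (by simp [hE])

theorem Int.sum_Icc_eq_sum_range {M : Type*} [AddCommMonoid M] (f : ℤ → M) (a : ℤ) (N : ℕ) :
    ∑ n ∈ Icc a (a + N), f n = ∑ k ∈ Finset.range (N + 1), f (a + k) := by
  rw [Int.Icc_eq_finset_map, sum_map, show (a + N + 1 - a).toNat = N + 1 by omega]
  rfl

theorem Int.card_Icc_floor_le {u v : ℝ} (huv : u ≤ v) :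
    (#(Icc ⌊u⌋ ⌊v⌋) : ℝ) ≤ v - u + 2 := by
  have h := Int.card_Icc_of_le ⌊u⌋ ⌊v⌋ (by linarith [Int.floor_le_floor huv] : ⌊u⌋ ≤ ⌊v⌋ + 1)
  have h' : (#(Icc ⌊u⌋ ⌊v⌋) : ℝ) = ⌊v⌋ + 1 - ⌊u⌋ := by exact_mod_cast h
  linarith [Int.floor_le v, Int.lt_floor_add_one u]

theorem Finset.eq_Icc_of_ordConnected {α : Type*} [LinearOrder α] [LocallyFiniteOrder α]
    {t : Finset α} (ht : (t : Set α).OrdConnected) (hne : t.Nonempty) :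
    t = Icc (t.min' hne) (t.max' hne) :=
  Subset.antisymm (fun n hn => mem_Icc.2 ⟨min'_le t n hn, le_max' t n hn⟩) fun _ hn =>
    ht.out (min'_mem t hne) (max'_mem t hne) (mem_Icc.1 hn)

theorem Finset.ordConnected_filter_mem {α β : Type*} [Preorder α] [Preorder β] {s : Finset α}
    {d : α → β} {I : Set β} [DecidablePred (· ∈ I)] (hs : (s : Set α).OrdConnected)
    (hd : MonotoneOn d s) (hI : I.OrdConnected) :
    ((s.filter (d · ∈ I) : Finset α) : Set α).OrdConnected := by
  refine ⟨fun n hn m hm k ⟨hnk, hkm⟩ => ?_⟩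
  obtain ⟨hn_s, hn_I⟩ := mem_filter.1 hn
  obtain ⟨hm_s, hm_I⟩ := mem_filter.1 hm
  have hk_s : k ∈ s := hs.out hn_s hm_s ⟨hnk, hkm⟩
  exact mem_filter.2 ⟨hk_s, hI.out hn_I hm_I ⟨hd hn_s hk_s hnk, hd hk_s hm_s hkm⟩⟩

theorem sub_mem_Icc_of_fwdDiff_mem_Icc {f : ℤ → ℝ} {m M : ℝ} {i j : ℤ} (hij : i ≤ j)
    (h : ∀ k ∈ Ico i j, Δ_[1] f k ∈ Set.Icc m M) :
    f j - f i ∈ Set.Icc (m * (j - i)) (M * (j - i)) := by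
  induction j, hij using Int.leInduction with
  | base => simp
  | succ j hij ih =>
    have hj := h j (by simp; omega)
    have ih := ih fun k hk => h k (by simp at hk ⊢; omega)
    simp only [fwdDiff, Set.mem_Icc] at hj ih ⊢
    push_cast
    constructor <;> nlinarith

theorem monotoneOn_of_mul_sub_le_sub {s : Set ℤ} {d : ℤ → ℝ} {lam : ℝ} (hlam : 0 ≤ lam)
    (hd : ∀ n ∈ s, ∀ m ∈ s, n ≤ m → lam * (m - n) ≤ d m - d n) : MonotoneOn d s :=
  fun n hn m hm hnm => by
    have := hd n hn m hm hnm
    have : (0 : ℝ) ≤ lam * (m - n) := mul_nonneg hlam (sub_nonneg.2 (Int.cast_le.2 hnm))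
    linarith

theorem card_filter_mem_Ico_le {s : Finset ℤ} {d : ℤ → ℝ} {lam u v : ℝ} (hlam : 0 < lam)
    (huv : u ≤ v) (hd : ∀ n ∈ s, ∀ m ∈ s, n ≤ m → lam * (m - n) ≤ d m - d n) :
    (#(s.filter (d · ∈ Set.Ico u v)) : ℝ) ≤ (v - u) / lam + 1 := by
  set t := s.filter (d · ∈ Set.Ico u v)
  rcases t.eq_empty_or_nonempty with ht | hne
  · rw [ht, card_empty, Nat.cast_zero]
    have : 0 ≤ (v - u) / lam := div_nonneg (by linarith) hlam.le
    linarith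
  obtain ⟨hlo_s, hlo_I⟩ := mem_filter.1 (min'_mem t hne)
  obtain ⟨hhi_s, hhi_I⟩ := mem_filter.1 (max'_mem t hne)
  have hcard : (#t : ℤ) ≤ t.max' hne + 1 - t.min' hne := by
    rw [← Int.card_Icc_of_le _ _ (by linarith [min'_le_max' t hne])]
    exact_mod_cast card_le_card fun n hn => mem_Icc.2 ⟨min'_le t n hn, le_max' t n hn⟩
  have hgrow := hd _ hlo_s _ hhi_s (min'_le_max' t hne)
  have hlen : ((t.max' hne : ℤ) : ℝ) - t.min' hne ≤ (v - u) / lam := by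
    rw [le_div_iff₀ hlam]
    linarith [hlo_I.1, hhi_I.2]
  have : (#t : ℝ) ≤ (t.max' hne : ℝ) + 1 - t.min' hne := by exact_mod_cast hcard
  linarith

theorem exists_fwdDiff_eq_of_hasDerivAt {f f' : ℝ → ℝ} {a : ℝ}
    (hf : ContinuousOn f (Set.Icc a (a + 1)))
    (hff' : ∀ t ∈ Set.Ioo a (a + 1), HasDerivAt f (f' t) t) :
    ∃ c ∈ Set.Ioo a (a + 1), Δ_[1] f a = f' c := by
  obtain ⟨c, hc, hslope⟩ := exists_hasDerivAt_eq_slope f f' (lt_add_one a) hf hff'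
  exact ⟨c, hc, by rw [hslope, add_sub_cancel_left, div_one, fwdDiff]⟩

theorem exists_fwdDiff_fwdDiff_eq_iteratedDeriv {F : ℝ → ℝ} {a : ℝ}
    (hF : ContinuousOn F (Set.Icc a (a + 2))) (hF2 : ContDiffOn ℝ 2 F (Set.Ioo a (a + 2))) :
    ∃ ξ ∈ Set.Ioo a (a + 2), Δ_[1] (Δ_[1] F) a = iteratedDeriv 2 F ξ := by
  obtain ⟨hF1, -, hF'1⟩ := (contDiffOn_succ_iff_deriv_of_isOpen (n := 1) isOpen_Ioo).1 hF2
  have hF' : ∀ t ∈ Set.Ioo a (a + 2), HasDerivAt F (deriv F t) t := fun t ht =>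
    (hF1.differentiableAt (isOpen_Ioo.mem_nhds ht)).hasDerivAt
  have hF'' : ∀ t ∈ Set.Ioo a (a + 2), HasDerivAt (deriv F) (iteratedDeriv 2 F t) t :=
    fun t ht => by
      rw [iteratedDeriv_succ, iteratedDeriv_one]
      exact ((hF'1.differentiableOn one_ne_zero).differentiableAt
        (isOpen_Ioo.mem_nhds ht)).hasDerivAt
  obtain ⟨c, hc, hΔF⟩ := exists_fwdDiff_eq_of_hasDerivAt (f := Δ_[1] F)
    (f' := Δ_[1] (deriv F))
    ((hF.comp (continuous_add_const 1).continuousOn fun t ht =>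
        ⟨by linarith [ht.1], by linarith [ht.2]⟩).sub
      (hF.mono (Set.Icc_subset_Icc le_rfl (by linarith))))
    fun t ht => ((hF' (t + 1) ⟨by linarith [ht.1], by linarith [ht.2]⟩).comp_add_const t 1).sub
      (hF' t ⟨ht.1, by linarith [ht.2]⟩)
  obtain ⟨ξ, hξ, hΔF'⟩ := exists_fwdDiff_eq_of_hasDerivAt (f := deriv F) (a := c)
    (fun t ht => (hF'' t ⟨by linarith [ht.1, hc.1], by linarith [ht.2, hc.2]⟩).continuousAt
      |>.continuousWithinAt)
    fun t ht => hF'' t ⟨by linarith [ht.1, hc.1], by linarith [ht.2, hc.2]⟩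
  exact ⟨ξ, ⟨by linarith [hξ.1, hc.1], by linarith [hξ.2, hc.2]⟩, hΔF.trans hΔF'⟩

theorem exists_fwdDiff_fwdDiff_eq_iteratedDerivWithin {F : ℝ → ℝ} {u v t : ℝ}
    (hF : ContDiffOn ℝ 2 F (Set.Icc u v)) (hut : u ≤ t) (htv : t + 2 ≤ v) :
    ∃ ξ ∈ Set.Icc u v, Δ_[1] (Δ_[1] F) t = iteratedDerivWithin 2 F (Set.Icc u v) ξ := by
  obtain ⟨ξ, hξ, hΔ⟩ := exists_fwdDiff_fwdDiff_eq_iteratedDeriv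
    (hF.continuousOn.mono (Set.Icc_subset_Icc hut htv))
    (hF.mono (Set.Ioo_subset_Icc_self.trans (Set.Icc_subset_Icc hut htv)))
  have hξ' : ξ ∈ Set.Ioo u v := ⟨by linarith [hξ.1], by linarith [hξ.2]⟩
  refine ⟨ξ, Set.Ioo_subset_Icc_self hξ', ?_⟩
  rw [hΔ, iteratedDerivWithin_eq_iteratedDeriv (uniqueDiffOn_Icc (by linarith))
    (hF.contDiffAt (Icc_mem_nhds hξ'.1 hξ'.2)) (Set.Ioo_subset_Icc_self hξ')]

theorem IsPreconnected.exists_abs_eq_one_mul_eq_abs {α : Type*} [TopologicalSpace α]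
    {S : Set α} {f : α → ℝ} (hS : IsPreconnected S) (hf : ContinuousOn f S)
    (h0 : ∀ x ∈ S, f x ≠ 0) : ∃ σ : ℝ, |σ| = 1 ∧ ∀ x ∈ S, σ * f x = |f x| := by
  rcases hS.eq_or_eq_neg_of_sq_eq hf hf.abs (fun x _ => (sq_abs (f x)).symm)
    fun hx => abs_ne_zero.2 (h0 _ hx) with h | h
  · exact ⟨1, abs_one, fun x hx => by rw [one_mul]; exact h hx⟩
  · exact ⟨-1, by simp, fun x hx => by rw [h hx]; simp⟩

namespace VanDerCorput

noncomputable def e (y : ℝ) : ℂ := Complex.exp (2 * π * Complex.I * y)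

theorem norm_e (y : ℝ) : ‖e y‖ = 1 := by
  rw [e, show 2 * π * Complex.I * y = ((2 * π * y : ℝ) : ℂ) * Complex.I by push_cast; ring]
  exact Complex.norm_exp_ofReal_mul_I _

theorem e_add (x y : ℝ) : e (x + y) = e x * e y := by
  rw [e, e, e, ← Complex.exp_add]
  push_cast
  ring_nf

theorem e_intCast (n : ℤ) : e n = 1 := by
  rw [e, show 2 * π * Complex.I * ((n : ℝ) : ℂ) = n * (2 * π * Complex.I) by push_cast; ring]
  exact Complex.exp_int_mul_two_pi_mul_I n

theorem e_sub_intCast (y : ℝ) (k : ℤ) : e (y - k) = e y := by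
  rw [sub_eq_add_neg, e_add, ← Int.cast_neg, e_intCast, mul_one]

theorem e_neg (y : ℝ) : e (-y) = (starRingEnd ℂ) (e y) := by
  rw [e, e, ← Complex.exp_conj]
  simp only [map_mul, map_ofNat, Complex.conj_ofReal, Complex.conj_I]
  push_cast
  ring_nf

theorem e_ne_one {θ : ℝ} (h0 : 0 < θ) (h1 : θ < 1) : e θ ≠ 1 := by
  rw [e, Ne, Complex.exp_eq_one_iff]
  rintro ⟨n, hn⟩
  have hθ : θ = n := by
    have := congrArg Complex.im hn
    simp at this
    nlinarith [pi_pos]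
  rw [hθ] at h0 h1
  norm_cast at h0 h1
  omega

theorem e_eq_sub_mul_inv (y : ℝ) {θ : ℝ} (h : e θ ≠ 1) :
    e y = (e (y + θ) - e y) * (e θ - 1)⁻¹ := by
  rw [e_add, ← mul_sub_one, mul_assoc, mul_inv_cancel₀ (sub_ne_zero.2 h), mul_one]

theorem inv_e_sub_one {θ : ℝ} (h : e θ ≠ 1) :
    (e θ - 1)⁻¹ = -1 / 2 - Complex.I / 2 * (cot (π * θ) : ℝ) := by
  have h' : e θ - 1 ≠ 0 := sub_ne_zero.2 h
  have h'' : 1 - e θ ≠ 0 := sub_ne_zero.2 (Ne.symm h)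
  rw [Complex.ofReal_cot, Complex.cot_eq_exp_ratio,
    show Complex.exp (2 * Complex.I * (π * θ : ℝ)) = e θ by rw [e]; push_cast; ring_nf]
  field_simp
  ring

theorem norm_inv_e_sub_one_le {θ : ℝ} (h : e θ ≠ 1) :
    ‖(e θ - 1)⁻¹‖ ≤ (1 + |cot (π * θ)|) / 2 := by
  rw [inv_e_sub_one h]
  refine (norm_sub_le _ _).trans_eq ?_
  simp only [norm_mul, norm_div, norm_neg, Complex.norm_I, Complex.norm_real, Real.norm_eq_abs]
  norm_num
  ring

theorem norm_inv_e_sub_one_sub_inv_e_sub_one {θ θ' : ℝ} (h : e θ ≠ 1) (h' : e θ' ≠ 1) :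
    ‖(e θ' - 1)⁻¹ - (e θ - 1)⁻¹‖ = |cot (π * θ) - cot (π * θ')| / 2 := by
  rw [inv_e_sub_one h, inv_e_sub_one h', show ∀ u v : ℝ, (-1 / 2 - Complex.I / 2 * (u : ℂ)) -
    (-1 / 2 - Complex.I / 2 * (v : ℂ)) = Complex.I / 2 * ((v - u : ℝ) : ℂ) by
      intro u v; push_cast; ring]
  rw [norm_mul, norm_div, Complex.norm_I, Complex.norm_real, Real.norm_eq_abs]
  norm_num
  ring

theorem norm_sum_e_le_card {ι : Type*} (s : Finset ι) (f : ι → ℝ) :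
    ‖∑ i ∈ s, e (f i)‖ ≤ #s := by
  simpa [norm_e] using norm_sum_le s fun i => e (f i)

theorem norm_sum_e_mul_of_abs_eq_one {ι : Type*} (s : Finset ι) (f : ι → ℝ) {σ : ℝ}
    (hσ : |σ| = 1) : ‖∑ i ∈ s, e (σ * f i)‖ = ‖∑ i ∈ s, e (f i)‖ := by
  rcases (abs_eq zero_le_one).1 hσ with rfl | rfl
  · simp
  · simp only [neg_one_mul, e_neg, ← map_sum, Complex.norm_conj]

theorem norm_sum_range_e_le_of_fwdDiff_mem_Icc {ψ : ℕ → ℝ} {N : ℕ} {δ : ℝ} (hδ : 0 < δ)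
    (hmem : ∀ k ≤ N, Δ_[1] ψ k ∈ Set.Icc δ (1 - δ))
    (hmono : ∀ k < N, Δ_[1] ψ k ≤ Δ_[1] ψ (k + 1)) :
    ‖∑ k ∈ range (N + 1), e (ψ k)‖ ≤ 1 + 2 * cot (π * δ) := by
  set θ := Δ_[1] ψ
  set c : ℕ → ℝ := fun k => cot (π * θ k)
  have hne : ∀ k ≤ N, e (θ k) ≠ 1 := fun k hk =>
    e_ne_one (by linarith [(hmem k hk).1]) (by linarith [(hmem k hk).2])
  have hc : ∀ k ≤ N, |c k| ≤ cot (π * δ) := fun k hk =>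
    abs_cot_pi_mul_le hδ (hmem k hk).1 (hmem k hk).2
  have hc_anti : ∀ k < N, c (k + 1) ≤ c k := fun k hk =>
    cot_pi_mul_le_cot_pi_mul (by linarith [(hmem k hk.le).1]) (hmono k hk)
      (by linarith [(hmem (k + 1) hk).2])
  refine (norm_sum_range_succ_le_of_eq_sub_mul (B := fun k => (e (θ k) - 1)⁻¹)
    (fun k => norm_e _) fun k hk => ?_).trans ?_
  · rw [show ψ (k + 1) = ψ k + θ k by simp [θ, fwdDiff]]
    exact e_eq_sub_mul_inv _ (hne k hk)
  rw [sum_congr rfl fun k hk => norm_inv_e_sub_one_sub_inv_e_sub_one (hne k (by simp at hk; omega))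
    (hne (k + 1) (by simp at hk; omega)), ← sum_div]
  rw [sum_congr rfl fun k hk => abs_of_nonneg (sub_nonneg.2 (hc_anti k (mem_range.1 hk))),
    sum_range_sub' c N]
  linarith [norm_inv_e_sub_one_le (hne N le_rfl), norm_inv_e_sub_one_le (hne 0 (Nat.zero_le _)),
    hc 0 (Nat.zero_le _), hc N le_rfl, le_abs_self (c 0), neg_abs_le (c N)]

theorem norm_sum_Icc_e_le_of_fwdDiff_mem_Icc {ψ : ℤ → ℝ} {a b : ℤ} {δ : ℝ} (hδ : 0 < δ)
    (hδ' : δ ≤ 1 / 2) (hmem : ∀ n ∈ Icc a b, Δ_[1] ψ n ∈ Set.Icc δ (1 - δ))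
    (hmono : MonotoneOn (Δ_[1] ψ) (Icc a b)) :
    ‖∑ n ∈ Icc a b, e (ψ n)‖ ≤ 2 / δ := by
  rcases lt_or_ge b a with hba | hab
  · rw [Icc_eq_empty_of_lt hba, sum_empty, norm_zero]
    positivity
  obtain ⟨N, rfl⟩ : ∃ N : ℕ, b = a + N := ⟨(b - a).toNat, by omega⟩
  have hΔ : ∀ k : ℕ, Δ_[1] (fun k : ℕ => ψ (a + k)) k = Δ_[1] ψ (a + k) := fun k => by
    simp only [fwdDiff]
    push_cast
    ring_nf
  rw [Int.sum_Icc_eq_sum_range]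
  refine (norm_sum_range_e_le_of_fwdDiff_mem_Icc hδ (fun k hk => ?_) fun k hk => ?_).trans
    (one_add_two_mul_cot_pi_mul_le hδ hδ')
  · rw [hΔ]
    exact hmem _ (by simp; omega)
  · rw [hΔ, hΔ]
    exact hmono (by simp; omega) (by simp; omega) (by push_cast; omega)

theorem norm_sum_filter_fwdDiff_mem_Ico_le {ψ : ℤ → ℝ} {s : Finset ℤ} {j : ℤ} {δ : ℝ}
    (hδ : 0 < δ) (hδ' : δ ≤ 1 / 2) (hs : (s : Set ℤ).OrdConnected)
    (hmono : MonotoneOn (Δ_[1] ψ) s) :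
    ‖∑ n ∈ s.filter (Δ_[1] ψ · ∈ Set.Ico (j + δ) (j + 1 - δ)), e (ψ n)‖ ≤ 2 / δ := by
  set t := s.filter (Δ_[1] ψ · ∈ Set.Ico (j + δ) (j + 1 - δ))
  rcases t.eq_empty_or_nonempty with ht | hne
  · rw [ht, sum_empty, norm_zero]
    positivity
  set ψ' : ℤ → ℝ := fun n => ψ n - (j * n : ℤ)
  have hΔ : ∀ n, Δ_[1] ψ' n = Δ_[1] ψ n - j := fun n => by
    simp only [ψ', fwdDiff]
    push_cast
    ring
  have hsub : t ⊆ s := filter_subset _ _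
  have hmem : ∀ n ∈ t, Δ_[1] ψ' n ∈ Set.Icc δ (1 - δ) := fun n hn => by
    obtain ⟨-, h1, h2⟩ := mem_filter.1 hn
    rw [hΔ]
    constructor <;> linarith
  have hIcc := eq_Icc_of_ordConnected (t := t)
    (ordConnected_filter_mem hs hmono Set.ordConnected_Ico) hne
  rw [← sum_congr rfl fun n _ => e_sub_intCast (ψ n) (j * n)]
  rw [hIcc] at hsub hmem ⊢
  refine norm_sum_Icc_e_le_of_fwdDiff_mem_Icc hδ hδ' hmem fun n hn m hm hnm => ?_
  rw [hΔ, hΔ]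
  linarith [hmono (hsub hn) (hsub hm) hnm]

theorem norm_sum_filter_floor_fwdDiff_le {ψ : ℤ → ℝ} {s : Finset ℤ} {j : ℤ} {lam : ℝ}
    (hlam : 0 < lam) (hlam4 : lam ≤ 1 / 4) (hs : (s : Set ℤ).OrdConnected)
    (hgrow : ∀ n ∈ s, ∀ m ∈ s, n ≤ m → lam * (m - n) ≤ Δ_[1] ψ m - Δ_[1] ψ n) :
    ‖∑ n ∈ s.filter (fun n => ⌊Δ_[1] ψ n + √lam⌋ = j), e (ψ n)‖ ≤ 5 / √lam := by
  set δ := √lam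
  set d := Δ_[1] ψ
  have hδ : 0 < δ := sqrt_pos.2 hlam
  have hδ2 : δ ≤ 1 / 2 := (sqrt_le_left (by norm_num)).2 (by linarith)
  have hmono : MonotoneOn d s := monotoneOn_of_mul_sub_le_sub hlam.le hgrow
  have hnear : s.filter (fun n => ⌊d n + δ⌋ = j ∧ d n < j + δ) =
      s.filter (d · ∈ Set.Ico (j - δ) (j + δ)) := filter_congr fun n _ => by
    rw [Int.floor_eq_iff, Set.mem_Ico]
    constructor
    · rintro ⟨⟨h1, -⟩, h3⟩; exact ⟨by linarith, h3⟩
    · rintro ⟨h1, h2⟩; exact ⟨⟨by linarith, by linarith⟩, h2⟩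
  have hfar : s.filter (fun n => ⌊d n + δ⌋ = j ∧ ¬d n < j + δ) =
      s.filter (d · ∈ Set.Ico (j + δ) (j + 1 - δ)) := filter_congr fun n _ => by
    rw [Int.floor_eq_iff, Set.mem_Ico, not_lt]
    constructor
    · rintro ⟨⟨-, h2⟩, h3⟩; exact ⟨h3, by linarith⟩
    · rintro ⟨h1, h2⟩; exact ⟨⟨by linarith, by linarith⟩, h1⟩
  rw [← sum_filter_add_sum_filter_not _ (fun n => d n < j + δ), filter_filter, filter_filter,
    hnear, hfar]
  refine (norm_add_le _ _).trans ?_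
  rw [show (5 : ℝ) / δ = (2 / δ + 1 / δ) + 2 / δ by ring]
  refine add_le_add ((norm_sum_e_le_card _ _).trans ?_)
    (norm_sum_filter_fwdDiff_mem_Ico_le hδ hδ2 hs hmono)
  refine (card_filter_mem_Ico_le hlam (by linarith) hgrow).trans ?_
  rw [show (j + δ) - (j - δ) = 2 * δ by ring, ← mul_self_sqrt hlam.le,
    show 2 * δ / (δ * δ) = 2 / δ by field_simp]
  have : 1 ≤ 1 / δ := by rw [le_div_iff₀ hδ]; linarith
  linarith

theorem norm_sum_Ioo_e_le_of_fwdDiff_sub_mem_Icc {ψ : ℤ → ℝ} {a b : ℤ} {lam Λ : ℝ} (hab : a ≤ b)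
    (hlam : 0 < lam) (hlam4 : lam ≤ 1 / 4) (hΛ : 0 ≤ Λ)
    (hgrow : ∀ n ∈ Ioo a b, ∀ m ∈ Ioo a b, n ≤ m →
      Δ_[1] ψ m - Δ_[1] ψ n ∈ Set.Icc (lam * (m - n)) (Λ * (m - n))) :
    ‖∑ n ∈ Ioo a b, e (ψ n)‖ ≤ (Λ * (b - a) + 2) * (5 / √lam) := by
  set δ := √lam
  set d := Δ_[1] ψ
  have hΛba : 0 ≤ Λ * (b - a) := mul_nonneg hΛ (by simp; exact_mod_cast hab)
  rcases (Ioo a b).eq_empty_or_nonempty with h | ⟨n₀, hn₀⟩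
  · rw [h, sum_empty, norm_zero]
    positivity
  have hlo : a + 1 ∈ Ioo a b := by simp at hn₀ ⊢; omega
  have hhi : b - 1 ∈ Ioo a b := by simp at hn₀ ⊢; omega
  have hmono : MonotoneOn d (Ioo a b) :=
    monotoneOn_of_mul_sub_le_sub hlam.le fun n hn m hm hnm => (hgrow n hn m hm hnm).1
  have hmaps : ∀ n ∈ Ioo a b, ⌊d n + δ⌋ ∈ Icc ⌊d (a + 1) + δ⌋ ⌊d (b - 1) + δ⌋ := fun n hn =>
    mem_Icc.2 ⟨Int.floor_le_floor (by linarith [hmono hlo hn (by simp at hn; omega)]),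
      Int.floor_le_floor (by linarith [hmono hn hhi (by simp at hn; omega)])⟩
  have hcard : (#(Icc ⌊d (a + 1) + δ⌋ ⌊d (b - 1) + δ⌋) : ℝ) ≤ Λ * (b - a) + 2 := by
    have hd := (hgrow _ hlo _ hhi (by simp at hn₀; omega)).2
    have : Λ * (((b - 1 : ℤ) : ℝ) - (a + 1 : ℤ)) ≤ Λ * (b - a) :=
      mul_le_mul_of_nonneg_left (by push_cast; linarith) hΛ
    have := Int.card_Icc_floor_le (by linarith [hmono hlo hhi (by simp at hn₀; omega)] :
      d (a + 1) + δ ≤ d (b - 1) + δ)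
    linarith
  rw [← sum_fiberwise_of_maps_to hmaps]
  refine (norm_sum_le _ _).trans ((sum_le_card_nsmul _ _ (5 / δ) fun j _ =>
    norm_sum_filter_floor_fwdDiff_le hlam hlam4 (by rw [coe_Ioo]; exact Set.ordConnected_Ioo)
      fun n hn m hm hnm => (hgrow n hn m hm hnm).1).trans ?_)
  rw [nsmul_eq_mul]
  exact mul_le_mul_of_nonneg_right hcard (by positivity)

theorem norm_sum_Ioc_e_le_of_fwdDiff_fwdDiff_mem_Icc {ψ : ℤ → ℝ} {a b : ℤ} {lam Λ : ℝ}
    (hab : a ≤ b) (hlam : 0 < lam) (hlam4 : lam ≤ 1 / 4) (hΛ : 0 ≤ Λ)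
    (h2 : ∀ n, a < n → n + 2 ≤ b → Δ_[1] (Δ_[1] ψ) n ∈ Set.Icc lam Λ) :
    ‖∑ n ∈ Ioc a b, e (ψ n)‖ ≤ 6 * (Λ * (b - a) + 2) / √lam := by
  have hδ : 2 ≤ 1 / √lam := by
    rw [le_div_iff₀ (sqrt_pos.2 hlam)]
    linarith [(sqrt_le_left (by norm_num : (0 : ℝ) ≤ 1 / 2)).2 (by linarith : lam ≤ (1 / 2) ^ 2)]
  have hΛba : 0 ≤ Λ * (b - a) := mul_nonneg hΛ (by simp; exact_mod_cast hab)
  rcases hab.eq_or_lt with rfl | hlt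
  · rw [Ioc_self, sum_empty, norm_zero]
    positivity
  have hIoo := norm_sum_Ioo_e_le_of_fwdDiff_sub_mem_Icc hab hlam hlam4 hΛ fun n hn m hm hnm =>
    sub_mem_Icc_of_fwdDiff_mem_Icc (f := Δ_[1] ψ) hnm fun k hk => h2 k (by simp at hn hk; omega)
      (by simp at hm hk; omega)
  -- `Δ_[1] ψ b` involves `ψ (b + 1)`, so the last term is bounded on its own.
  rw [← Ioo_insert_right hlt, sum_insert (by simp)]
  refine (norm_add_le _ _).trans ?_
  rw [norm_e, show 6 * (Λ * (b - a) + 2) / √lam =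
    (Λ * (b - a) + 2) * (5 / √lam) + (Λ * (b - a) + 2) * (1 / √lam) by ring]
  nlinarith

theorem norm_sum_Ioc_e_le_of_iteratedDerivWithin_mem_Icc {F : ℝ → ℝ} {u v x lam Λ : ℝ}
    (hux : u ≤ x) (hxv : x ≤ v) (hlam : 0 < lam) (hlam4 : lam ≤ 1 / 4) (hΛ : 0 ≤ Λ)
    (hF : ContDiffOn ℝ 2 F (Set.Icc u v))
    (hF'' : ∀ y ∈ Set.Icc u v, iteratedDerivWithin 2 F (Set.Icc u v) y ∈ Set.Icc lam Λ) :
    ‖∑ n ∈ Ioc ⌊u⌋ ⌊x⌋, e (F n)‖ ≤ 6 * (Λ * (⌊x⌋ - ⌊u⌋) + 2) / √lam := by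
  refine norm_sum_Ioc_e_le_of_fwdDiff_fwdDiff_mem_Icc (Int.floor_le_floor hux) hlam hlam4 hΛ
    fun n hn hn2 => ?_
  obtain ⟨ξ, hξ, hΔ⟩ := exists_fwdDiff_fwdDiff_eq_iteratedDerivWithin hF (t := n)
    (Int.floor_lt.1 hn).le (by have := Int.le_floor.1 hn2; push_cast at this; linarith)
  have hcast : Δ_[1] (Δ_[1] fun n : ℤ => F n) n = Δ_[1] (Δ_[1] F) n := by
    simp only [fwdDiff]
    push_cast
    ring_nf
  rw [hcast, hΔ]
  exact hF'' ξ hξ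

end VanDerCorput

open VanDerCorput in
theorem van_der_corput_second_derivative :
    ∃ C > 0, ∀ (P x A lam : ℝ) (F : ℝ → ℝ),
      1 ≤ P → P < x → x ≤ 2 * P → 0 < lam → 1 ≤ A →
      ContDiffOn ℝ 2 F (Set.Icc P (2 * P)) →
      (∀ y ∈ Set.Icc P (2 * P),
        lam ≤ |iteratedDerivWithin 2 F (Set.Icc P (2 * P)) y| ∧
        |iteratedDerivWithin 2 F (Set.Icc P (2 * P)) y| ≤ A * lam) →
      ‖∑ n ∈ Finset.Ioc ⌊P⌋ ⌊x⌋, Complex.exp (2 * Real.pi * Complex.I * F (n : ℝ))‖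
        ≤ C * (A * P * lam ^ ((1 : ℝ) / 2) + lam ^ (-(1 : ℝ) / 2)) := by
  refine ⟨12, by norm_num, fun P x A lam F hP hPx hx hlam hA hF hF'' => ?_⟩
  rw [← sqrt_eq_rpow, neg_div, rpow_neg hlam.le, ← sqrt_eq_rpow]
  change ‖∑ n ∈ Ioc ⌊P⌋ ⌊x⌋, e (F n)‖ ≤ _
  have hlen : (⌊x⌋ : ℝ) - ⌊P⌋ ≤ 2 * P := by
    linarith [Int.floor_le x, Int.lt_floor_add_one P]
  have hδ : 0 < √lam := sqrt_pos.2 hlam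
  rcases le_or_gt lam (1 / 4) with hsmall | hlarge
  · obtain ⟨σ, hσ, hσF⟩ := isPreconnected_Icc.exists_abs_eq_one_mul_eq_abs
      (hF.continuousOn_iteratedDerivWithin le_rfl (uniqueDiffOn_Icc (by linarith)))
      fun y hy => abs_pos.1 (hlam.trans_le (hF'' y hy).1)
    rw [← norm_sum_e_mul_of_abs_eq_one _ _ hσ]
    refine (norm_sum_Ioc_e_le_of_iteratedDerivWithin_mem_Icc (F := fun y => σ * F y)
      (Λ := A * lam) hPx.le hx hlam hsmall (by positivity) (contDiffOn_const.mul hF)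
      fun y hy => ?_).trans ?_
    · rw [iteratedDerivWithin_const_mul_field, hσF y hy]
      exact hF'' y hy
    · rw [div_le_iff₀ hδ]
      nth_rewrite 1 [← mul_self_sqrt hlam.le]
      field_simp
      nlinarith [mul_le_mul_of_nonneg_left hlen (by positivity : 0 ≤ A * √lam * √lam * √lam)]
  · have hcard : (#(Ioc ⌊P⌋ ⌊x⌋) : ℝ) = ⌊x⌋ - ⌊P⌋ := by
      exact_mod_cast Int.card_Ioc_of_le _ _ (Int.floor_le_floor hPx.le)
    have hhalf : 1 / 2 < √lam := (lt_sqrt (by norm_num)).2 (by linarith)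
    refine (norm_sum_e_le_card _ _).trans ?_
    rw [hcard]
    nlinarith [mul_le_mul_of_nonneg_left hhalf.le (by positivity : 0 ≤ A * P), inv_pos.2 hδ]
end
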